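/- arXiv:2010.03504 — 3 statements merged into one kernel-verified Lean document; each statement's English description precedes it below -/
import Mathlib

section
/- Let r : [0,1]² → (0,1) be measurable with log r and log(1-r) integrable. If (f_n) is a sequence of measurable functions [0,1]² → [0,1] converging to f in L², then I_r(f_n) → I_r(f), where I_r(h) = ∫ R(h(x,y) | r(x,y)) dx dy. -/
open MeasureTheory

noncomputable def Rent (a b : ℝ) : ℝ :=
  a * Real.log (a / b) + (1 - a) * Real.log ((1 - a) / (1 - b))

noncomputable def sqMeasure : Measure (ℝ × ℝ) :=
  volume.restrict (Set.Icc (0:ℝ) 1 ×ˢ Set.Icc (0:ℝ) 1)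

open Filter Topology Real Set

/-! L² convergence implies convergence in measure, so every subsequence of `f` has a further
subsequence converging a.e. to `g`; along it dominated convergence applies, since `a ↦ Rent a b` is
continuous for `b ∈ (0, 1)` and `|Rent a b| ≤ 2 + |log b| + |log (1 - b)|` for `a ∈ [0, 1]`, an
integrable bound by hypothesis. -/

lemma rent_eq {a b : ℝ} (hb : b ≠ 0) (hb' : b ≠ 1) :
    Rent a b = a * log a + (1 - a) * log (1 - a) - a * log b - (1 - a) * log (1 - b) := by
  have hb'' : 1 - b ≠ 0 := sub_ne_zero.2 hb'.symm
  have h₁ : a * log (a / b) = a * log a - a * log b := by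
    rcases eq_or_ne a 0 with rfl | ha
    · simp
    · rw [log_div ha hb, mul_sub]
  have h₂ : (1 - a) * log ((1 - a) / (1 - b)) = (1 - a) * log (1 - a) - (1 - a) * log (1 - b) := by
    rcases eq_or_ne (1 - a) 0 with ha | ha
    · simp [ha]
    · rw [log_div ha hb'', mul_sub]
  rw [Rent, h₁, h₂]
  ring

lemma continuous_rent_left {b : ℝ} (hb : b ≠ 0) (hb' : b ≠ 1) : Continuous fun a => Rent a b := by
  simp only [rent_eq hb hb']
  exact ((continuous_mul_log.add (continuous_mul_log.comp (continuous_sub_left 1))).sub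
    (by fun_prop)).sub (by fun_prop)

lemma abs_mul_log_le_one {a : ℝ} (h₀ : 0 ≤ a) (h₁ : a ≤ 1) : |a * log a| ≤ 1 := by
  rcases h₀.eq_or_lt with rfl | h₀
  · simp
  · rw [mul_comm]
    exact (abs_log_mul_self_lt a h₀ h₁).le

lemma abs_rent_le {a b : ℝ} (ha : a ∈ Icc (0 : ℝ) 1) (hb : b ∈ Ioo (0 : ℝ) 1) :
    |Rent a b| ≤ 2 + |log b| + |log (1 - b)| := by
  obtain ⟨ha₀, ha₁⟩ := ha
  have h₁ := abs_le.1 (abs_mul_log_le_one ha₀ ha₁)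
  have h₂ := abs_le.1 (abs_mul_log_le_one (sub_nonneg.2 ha₁) (by linarith))
  have h₃ : |a * log b| ≤ |log b| := by
    rw [abs_mul, abs_of_nonneg ha₀]
    exact mul_le_of_le_one_left (abs_nonneg _) ha₁
  have h₄ : |(1 - a) * log (1 - b)| ≤ |log (1 - b)| := by
    rw [abs_mul, abs_of_nonneg (sub_nonneg.2 ha₁)]
    exact mul_le_of_le_one_left (abs_nonneg _) (by linarith)
  rw [abs_le] at h₃ h₄
  rw [rent_eq hb.1.ne' hb.2.ne, abs_le]
  constructor <;> linarith

lemma Measurable.rent {α : Type*} [MeasurableSpace α] {f g : α → ℝ} (hf : Measurable f)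
    (hg : Measurable g) : Measurable fun x => Rent (f x) (g x) := by
  unfold Rent
  fun_prop

namespace MeasureTheory

variable {α : Type*} [MeasurableSpace α] {μ : Measure α}

theorem tendstoInMeasure_of_tendsto_integral_sq {ι : Type*} {l : Filter ι} {f : ι → α → ℝ}
    {g : α → ℝ} (hf : ∀ i, AEStronglyMeasurable (f i) μ) (hg : AEStronglyMeasurable g μ)
    (hfg : ∀ i, MemLp (f i - g) 2 μ)
    (h : Tendsto (fun i => ∫ x, (f i x - g x) ^ 2 ∂μ) l (𝓝 0)) :
    TendstoInMeasure μ f l g := by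
  refine tendstoInMeasure_of_tendsto_eLpNorm two_ne_zero hf hg ?_
  have h_eLpNorm : ∀ i, eLpNorm (f i - g) 2 μ
      = ENNReal.ofReal ((∫ x, (f i x - g x) ^ 2 ∂μ) ^ (2⁻¹ : ℝ)) := fun i => by
    simp [(hfg i).eLpNorm_eq_integral_rpow_norm two_ne_zero ENNReal.ofNat_ne_top]
  have h_sqrt : Tendsto (fun t : ℝ => ENNReal.ofReal (t ^ (2⁻¹ : ℝ))) (𝓝 0) (𝓝 0) := by
    simpa [Function.comp_def] using (ENNReal.continuous_ofReal.comp
      (continuous_rpow_const (by norm_num : (0 : ℝ) ≤ 2⁻¹))).tendsto 0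
  simp_rw [h_eLpNorm]
  exact h_sqrt.comp h

theorem tendsto_integral_comp_of_tendstoInMeasure {β E : Type*} [PseudoEMetricSpace β]
    [NormedAddCommGroup E] [NormedSpace ℝ E] {f : ℕ → α → β} {g : α → β} {Φ : α → β → E}
    (bound : α → ℝ) (hfg : TendstoInMeasure μ f atTop g)
    (hΦ : ∀ᵐ x ∂μ, ContinuousAt (Φ x) (g x))
    (hΦm : ∀ n, AEStronglyMeasurable (fun x => Φ x (f n x)) μ) (hbound : Integrable bound μ)
    (h_bound : ∀ n, ∀ᵐ x ∂μ, ‖Φ x (f n x)‖ ≤ bound x) :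
    Tendsto (fun n => ∫ x, Φ x (f n x) ∂μ) atTop (𝓝 (∫ x, Φ x (g x) ∂μ)) := by
  refine tendsto_of_subseq_tendsto fun ns hns => ?_
  obtain ⟨ms, -, hms⟩ := (hfg.comp hns).exists_seq_tendsto_ae
  refine ⟨ms, tendsto_integral_of_dominated_convergence bound (fun k => hΦm _) hbound
    (fun k => h_bound _) ?_⟩
  filter_upwards [hΦ, hms] with x hx hxt using hx.tendsto.comp hxt

end MeasureTheory

instance isFiniteMeasure_sqMeasure : IsFiniteMeasure sqMeasure :=
  isFiniteMeasure_restrict.2 (isCompact_Icc.prod isCompact_Icc).measure_lt_top.ne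

theorem I_r_continuous_L2
    (r : ℝ × ℝ → ℝ) (hrm : Measurable r)
    (hr : ∀ p ∈ Set.Icc (0:ℝ) 1 ×ˢ Set.Icc (0:ℝ) 1, r p ∈ Set.Ioo (0:ℝ) 1)
    (hlogr : Integrable (fun p => Real.log (r p)) sqMeasure)
    (hlogr' : Integrable (fun p => Real.log (1 - r p)) sqMeasure)
    (f : ℕ → ℝ × ℝ → ℝ) (hfm : ∀ n, Measurable (f n))
    (hf01 : ∀ n, ∀ p ∈ Set.Icc (0:ℝ) 1 ×ˢ Set.Icc (0:ℝ) 1, f n p ∈ Set.Icc (0:ℝ) 1)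
    (g : ℝ × ℝ → ℝ) (hgm : Measurable g)
    (hg01 : ∀ p ∈ Set.Icc (0:ℝ) 1 ×ˢ Set.Icc (0:ℝ) 1, g p ∈ Set.Icc (0:ℝ) 1)
    (hL2 : Filter.Tendsto (fun n => ∫ p, (f n p - g p)^2 ∂sqMeasure)
      Filter.atTop (nhds 0)) :
    Filter.Tendsto (fun n => ∫ p, Rent (f n p) (r p) ∂sqMeasure)
      Filter.atTop (nhds (∫ p, Rent (g p) (r p) ∂sqMeasure)) := by
  have hS : ∀ᵐ p ∂sqMeasure, p ∈ Icc (0 : ℝ) 1 ×ˢ Icc (0 : ℝ) 1 :=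
    ae_restrict_mem (measurableSet_Icc.prod measurableSet_Icc)
  have h_meas : TendstoInMeasure sqMeasure f atTop g := by
    refine tendstoInMeasure_of_tendsto_integral_sq (fun n => (hfm n).aestronglyMeasurable)
      hgm.aestronglyMeasurable (fun n => ?_) hL2
    refine MemLp.of_bound ((hfm n).sub hgm).aestronglyMeasurable 1 ?_
    filter_upwards [hS] with p hp using dist_le_of_mem_Icc_01 (hf01 n p hp) (hg01 p hp)
  refine tendsto_integral_comp_of_tendstoInMeasure (Φ := fun p a => Rent a (r p))
    (fun p => 2 + |log (r p)| + |log (1 - r p)|) h_meas ?_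
    (fun n => ((hfm n).rent hrm).aestronglyMeasurable)
    (((integrable_const 2).add hlogr.abs).add hlogr'.abs) fun n => ?_
  · filter_upwards [hS] with p hp
    exact (continuous_rent_left (hr p hp).1.ne' (hr p hp).2.ne).continuousAt
  · filter_upwards [hS] with p hp using abs_rent_le (hf01 n p hp) (hr p hp)
end

section
/- Let r : [0,1]² → (0,1) be measurable with log r ∈ L¹([0,1]²), and let r̄_n be the level-n block-average approximant of r. If r̄_n → r almost everywhere, then ‖log r̄_n - log r‖_{L¹} → 0 as n → ∞. -/
/-!
Write `F n = -log r̄_n` and `g = -log r`. On each block, Jensen's inequality for `exp` gives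
`0 ≤ F n ≤ ḡ_n`, the block average of `g`, and block averaging preserves the integral over the
unit square, so `∫ F n ≤ ∫ g`. Together with `F n → g` a.e., this upper bound on the integrals
is exactly what a Scheffé-type argument needs to turn a.e. convergence into `L¹` convergence.
-/

open MeasureTheory

noncomputable def blockAvg (n : ℕ) (h : ℝ × ℝ → ℝ) : ℝ × ℝ → ℝ := fun q =>
  (n:ℝ)^2 * ∫ p in
      Set.Ico ((⌊(n:ℝ) * q.1⌋ : ℝ) / n) (((⌊(n:ℝ) * q.1⌋ : ℝ) + 1) / n) ×ˢ
      Set.Ico ((⌊(n:ℝ) * q.2⌋ : ℝ) / n) (((⌊(n:ℝ) * q.2⌋ : ℝ) + 1) / n), h p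

open Set Filter Topology Function

lemma mem_Ico_div_iff_floor_eq {a x : ℝ} (ha : 0 < a) {k : ℤ} :
    x ∈ Ico (k / a) ((k + 1) / a) ↔ ⌊a * x⌋ = k := by
  rw [Int.floor_eq_iff, mem_Ico, div_le_iff₀ ha, lt_div_iff₀ ha, mul_comm x]

lemma floor_mul_mem_Ico_iff {x : ℝ} {n : ℕ} (hn : n ≠ 0) :
    ⌊(n : ℝ) * x⌋ ∈ Finset.Ico (0 : ℤ) n ↔ x ∈ Ico (0 : ℝ) 1 := by
  have hn : (0 : ℝ) < n := by positivity
  rw [Finset.mem_Ico, Int.floor_nonneg, Int.floor_lt, mem_Ico, Int.cast_natCast,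
    mul_nonneg_iff_of_pos_left hn, mul_lt_iff_lt_one_right hn]

theorem tendsto_integral_abs_sub_of_tendsto_ae_of_integral_le {α ι : Type*} [MeasurableSpace α]
    {μ : Measure α} {l : Filter ι} [l.IsCountablyGenerated] {F : ι → α → ℝ} {f : α → ℝ}
    (hF_int : ∀ᶠ i in l, Integrable (F i) μ) (hf : Integrable f μ)
    (hF_nonneg : ∀ᶠ i in l, 0 ≤ᵐ[μ] F i)
    (hF_le : ∀ᶠ i in l, ∫ x, F i x ∂μ ≤ ∫ x, f x ∂μ)
    (hlim : ∀ᵐ x ∂μ, Tendsto (fun i => F i x) l (𝓝 (f x))) :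
    Tendsto (fun i => ∫ x, |F i x - f x| ∂μ) l (𝓝 0) := by
  -- `|a - b| = (a - b) + 2 (b - a)⁺`, and `(f - F i)⁺ ≤ |f|` is dominated since `F i ≥ 0`.
  have habs (a b : ℝ) : |a - b| = (a - b) + 2 * max (b - a) 0 := by
    rcases le_total a b with h | h
    · rw [abs_of_nonpos (by linarith), max_eq_left (by linarith)]; ring
    · rw [abs_of_nonneg (by linarith), max_eq_right (by linarith)]; ring
  set G : ι → α → ℝ := fun i x => max (f x - F i x) 0
  have hG_int : ∀ᶠ i in l, Integrable (G i) μ :=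
    hF_int.mono fun i hi => (hf.sub hi).sup (integrable_zero _ _ μ)
  have hG_lim : Tendsto (fun i => ∫ x, G i x ∂μ) l (𝓝 0) := by
    have hG_bound : ∀ᶠ i in l, ∀ᵐ x ∂μ, ‖G i x‖ ≤ |f x| :=
      hF_nonneg.mono fun i hi => hi.mono fun x hx => by
        rw [Real.norm_of_nonneg (le_max_right _ _)]
        exact max_le (by linarith [le_abs_self (f x), show 0 ≤ F i x from hx]) (abs_nonneg _)
    have hG_pointwise : ∀ᵐ x ∂μ, Tendsto (fun i => G i x) l (𝓝 0) := hlim.mono fun x hx => by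
      simpa [G] using
        ((tendsto_const_nhds (x := f x)).sub hx).max (tendsto_const_nhds (x := (0 : ℝ)))
    simpa using tendsto_integral_filter_of_dominated_convergence _
      (hG_int.mono fun _ hi => hi.aestronglyMeasurable) hG_bound hf.abs hG_pointwise
  have hsplit : ∀ᶠ i in l, ∫ x, |F i x - f x| ∂μ ≤ 2 * ∫ x, G i x ∂μ := by
    filter_upwards [hF_int, hG_int, hF_le] with i hFi hGi hle
    calc ∫ x, |F i x - f x| ∂μ = ∫ x, (F i x - f x) + 2 * G i x ∂μ :=
          integral_congr_ae (ae_of_all _ fun x => habs _ _)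
      _ = (∫ x, F i x ∂μ - ∫ x, f x ∂μ) + 2 * ∫ x, G i x ∂μ := by
          rw [integral_add (f := fun x => F i x - f x) (hFi.sub hf) (hGi.const_mul 2),
            integral_sub hFi hf, integral_const_mul]
      _ ≤ 2 * ∫ x, G i x ∂μ := by linarith
  exact tendsto_of_tendsto_of_tendsto_of_le_of_le' tendsto_const_nhds
    (by simpa using hG_lim.const_mul 2)
    (Eventually.of_forall fun _ => integral_nonneg fun _ => abs_nonneg _) hsplit

theorem exp_average_log_le_average {α : Type*} [MeasurableSpace α] {μ : Measure α}
    [IsFiniteMeasure μ] [NeZero μ] {f : α → ℝ} (hf_pos : ∀ᵐ x ∂μ, 0 < f x)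
    (hf : Integrable f μ) (hlog : Integrable (fun x => Real.log (f x)) μ) :
    Real.exp (⨍ x, Real.log (f x) ∂μ) ≤ ⨍ x, f x ∂μ := by
  have hexp_log : (fun x => Real.exp (Real.log (f x))) =ᵐ[μ] f :=
    hf_pos.mono fun _ hx => Real.exp_log hx
  calc Real.exp (⨍ x, Real.log (f x) ∂μ) ≤ ⨍ x, Real.exp (Real.log (f x)) ∂μ :=
        convexOn_exp.map_average_le Real.continuous_exp.continuousOn isClosed_univ
          (ae_of_all _ fun _ => mem_univ _) hlog (hf.congr hexp_log.symm)
    _ = ⨍ x, f x ∂μ := average_congr hexp_log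

noncomputable section

namespace blockAvg

def block (n : ℕ) (z : ℤ × ℤ) : Set (ℝ × ℝ) :=
  Ico ((z.1 : ℝ) / n) ((z.1 + 1) / n) ×ˢ Ico ((z.2 : ℝ) / n) ((z.2 + 1) / n)

def index (n : ℕ) (q : ℝ × ℝ) : ℤ × ℤ := (⌊(n : ℝ) * q.1⌋, ⌊(n : ℝ) * q.2⌋)

lemma eq_mul_setIntegral_block (n : ℕ) (h : ℝ × ℝ → ℝ) (q : ℝ × ℝ) :
    blockAvg n h q = (n : ℝ) ^ 2 * ∫ p in block n (index n q), h p := rfl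

variable {n : ℕ}

lemma mem_block_iff (hn : n ≠ 0) {z : ℤ × ℤ} {q : ℝ × ℝ} : q ∈ block n z ↔ index n q = z := by
  have hn : (0 : ℝ) < n := by positivity
  rw [block, mem_prod, mem_Ico_div_iff_floor_eq hn, mem_Ico_div_iff_floor_eq hn, index,
    Prod.ext_iff]

lemma measurableSet_block (n : ℕ) (z : ℤ × ℤ) : MeasurableSet (block n z) :=
  measurableSet_Ico.prod measurableSet_Ico

lemma volume_block (hn : n ≠ 0) (z : ℤ × ℤ) :
    volume (block n z) = ENNReal.ofReal ((n : ℝ) ^ 2)⁻¹ := by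
  have hlen (k : ℝ) : (k + 1) / n - k / n = (n : ℝ)⁻¹ := by field_simp; ring
  rw [block, Measure.volume_eq_prod, Measure.prod_prod, Real.volume_Ico, Real.volume_Ico, hlen,
    hlen, ← ENNReal.ofReal_mul (by positivity), sq, mul_inv]

lemma measureReal_block (hn : n ≠ 0) (z : ℤ × ℤ) : volume.real (block n z) = ((n : ℝ) ^ 2)⁻¹ := by
  rw [measureReal_def, volume_block hn, ENNReal.toReal_ofReal (by positivity)]

lemma eq_mul_setIntegral_of_mem_block (hn : n ≠ 0) (h : ℝ × ℝ → ℝ) {z : ℤ × ℤ} {q : ℝ × ℝ}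
    (hq : q ∈ block n z) : blockAvg n h q = (n : ℝ) ^ 2 * ∫ p in block n z, h p := by
  rw [eq_mul_setIntegral_block, (mem_block_iff hn).1 hq]

lemma eq_setAverage_block (hn : n ≠ 0) (h : ℝ × ℝ → ℝ) (q : ℝ × ℝ) :
    blockAvg n h q = ⨍ p in block n (index n q), h p := by
  rw [eq_mul_setIntegral_block, setAverage_eq, measureReal_block hn, inv_inv, smul_eq_mul]

def unitSquareIndices (n : ℕ) : Finset (ℤ × ℤ) := Finset.Ico (0 : ℤ) n ×ˢ Finset.Ico (0 : ℤ) n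

lemma index_mem_unitSquareIndices_iff (hn : n ≠ 0) {q : ℝ × ℝ} :
    index n q ∈ unitSquareIndices n ↔ q ∈ Ico (0 : ℝ) 1 ×ˢ Ico (0 : ℝ) 1 := by
  rw [unitSquareIndices, index, Finset.mem_product, floor_mul_mem_Ico_iff hn,
    floor_mul_mem_Ico_iff hn, mem_prod]

lemma block_subset_unitSquare (hn : n ≠ 0) {z : ℤ × ℤ} (hz : z ∈ unitSquareIndices n) :
    block n z ⊆ Ico (0 : ℝ) 1 ×ˢ Ico (0 : ℝ) 1 := fun q hq => by
  rw [← index_mem_unitSquareIndices_iff hn, (mem_block_iff hn).1 hq]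
  exact hz

lemma iUnion_block_unitSquareIndices (hn : n ≠ 0) :
    ⋃ z ∈ unitSquareIndices n, block n z = Ico (0 : ℝ) 1 ×ˢ Ico (0 : ℝ) 1 := by
  ext q
  simp only [mem_iUnion, mem_block_iff hn, exists_prop, ← index_mem_unitSquareIndices_iff hn]
  exact ⟨fun ⟨z, hz, hqz⟩ => hqz ▸ hz, fun hq => ⟨_, hq, rfl⟩⟩

lemma pairwise_disjoint_block (hn : n ≠ 0) : Pairwise (Disjoint on block n) :=
  fun _ _ hzw => disjoint_left.2 fun _ hz hw =>
    hzw (((mem_block_iff hn).1 hz).symm.trans ((mem_block_iff hn).1 hw))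

lemma integrableOn_block (hn : n ≠ 0) (h : ℝ × ℝ → ℝ) (z : ℤ × ℤ) :
    IntegrableOn (blockAvg n h) (block n z) := by
  refine (integrableOn_const (C := (n : ℝ) ^ 2 * ∫ p in block n z, h p)
    (by rw [volume_block hn]; exact ENNReal.ofReal_ne_top)).congr_fun
    (fun q hq => (eq_mul_setIntegral_of_mem_block hn h hq).symm) (measurableSet_block n z)

lemma setIntegral_block (hn : n ≠ 0) (h : ℝ × ℝ → ℝ) (z : ℤ × ℤ) :
    ∫ q in block n z, blockAvg n h q = ∫ q in block n z, h q := by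
  rw [setIntegral_congr_fun (measurableSet_block n z) fun _ hq =>
      eq_mul_setIntegral_of_mem_block hn h hq,
    setIntegral_const, measureReal_block hn, smul_eq_mul, ← mul_assoc,
    inv_mul_cancel₀ (by positivity), one_mul]

end blockAvg

open blockAvg

variable {n : ℕ}

lemma integrableOn_blockAvg (hn : n ≠ 0) (h : ℝ × ℝ → ℝ) :
    IntegrableOn (blockAvg n h) (Ico (0 : ℝ) 1 ×ˢ Ico (0 : ℝ) 1) := by
  rw [← iUnion_block_unitSquareIndices hn, integrableOn_finset_iUnion]
  exact fun z _ => integrableOn_block hn h z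

lemma setIntegral_blockAvg (hn : n ≠ 0) {h : ℝ × ℝ → ℝ}
    (hh : IntegrableOn h (Ico (0 : ℝ) 1 ×ˢ Ico (0 : ℝ) 1)) :
    ∫ q in Ico (0 : ℝ) 1 ×ˢ Ico (0 : ℝ) 1, blockAvg n h q =
      ∫ q in Ico (0 : ℝ) 1 ×ˢ Ico (0 : ℝ) 1, h q := by
  have hmeas (z : ℤ × ℤ) (_ : z ∈ unitSquareIndices n) := measurableSet_block n z
  have hdisj := (pairwise_disjoint_block hn).set_pairwise (unitSquareIndices n : Set (ℤ × ℤ))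
  rw [← iUnion_block_unitSquareIndices hn, integral_biUnion_finset _ hmeas hdisj
    fun z _ => integrableOn_block hn h z, integral_biUnion_finset _ hmeas hdisj
    fun z hz => hh.mono_set (block_subset_unitSquare hn hz)]
  exact Finset.sum_congr rfl fun z _ => setIntegral_block hn h z

lemma measurable_blockAvg (n : ℕ) (h : ℝ × ℝ → ℝ) : Measurable (blockAvg n h) := by
  have hindex : Measurable (index n) :=
    (Int.measurable_floor.comp (measurable_const.mul measurable_fst)).prodMk
      (Int.measurable_floor.comp (measurable_const.mul measurable_snd))
  change Measurable ((fun z => (n : ℝ) ^ 2 * ∫ p in block n z, h p) ∘ index n)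
  exact (measurable_of_countable _).comp hindex

variable {r : ℝ × ℝ → ℝ} {q : ℝ × ℝ}

lemma neg_log_blockAvg_nonneg_and_le (hn : n ≠ 0) (hrm : Measurable r)
    (hr : ∀ p ∈ Ico (0 : ℝ) 1 ×ˢ Ico (0 : ℝ) 1, r p ∈ Ioc (0 : ℝ) 1)
    (hlog : IntegrableOn (fun p => Real.log (r p)) (Ico (0 : ℝ) 1 ×ˢ Ico (0 : ℝ) 1))
    (hq : q ∈ Ico (0 : ℝ) 1 ×ˢ Ico (0 : ℝ) 1) :
    0 ≤ -Real.log (blockAvg n r q) ∧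
      -Real.log (blockAvg n r q) ≤ blockAvg n (fun p => -Real.log (r p)) q := by
  set B := block n (index n q)
  have hB : B ⊆ Ico (0 : ℝ) 1 ×ˢ Ico (0 : ℝ) 1 :=
    block_subset_unitSquare hn ((index_mem_unitSquareIndices_iff hn).2 hq)
  have : IsFiniteMeasure (volume.restrict B) :=
    isFiniteMeasure_restrict.2 (by rw [volume_block hn]; exact ENNReal.ofReal_ne_top)
  have : NeZero (volume.restrict B) :=
    ⟨by rw [Ne, Measure.restrict_eq_zero, volume_block hn, ENNReal.ofReal_eq_zero, not_le]
        positivity⟩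
  have hrB : ∀ᵐ p ∂volume.restrict B, r p ∈ Ioc (0 : ℝ) 1 :=
    (ae_restrict_mem (measurableSet_block n _)).mono fun p hp => hr p (hB hp)
  have hr_int : IntegrableOn r B :=
    Integrable.of_bound hrm.aestronglyMeasurable 1 <| hrB.mono fun p hp => by
      rw [Real.norm_of_nonneg hp.1.le]; exact hp.2
  have havg_mem : ⨍ p in B, r p ∈ Icc (0 : ℝ) 1 :=
    (convex_Icc 0 1).average_mem isClosed_Icc (hrB.mono fun _ hp => Ioc_subset_Icc_self hp) hr_int
  have hjensen := exp_average_log_le_average (hrB.mono fun _ hp => hp.1) hr_int (hlog.mono_set hB)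
  rw [eq_setAverage_block hn, eq_setAverage_block hn, average_neg, neg_le_neg_iff]
  exact ⟨neg_nonneg.2 (Real.log_nonpos havg_mem.1 havg_mem.2),
    (Real.le_log_iff_exp_le ((Real.exp_pos _).trans_le hjensen)).2 hjensen⟩

end

lemma sqMeasure_eq_restrict_Ico :
    sqMeasure = volume.restrict (Ico (0 : ℝ) 1 ×ˢ Ico (0 : ℝ) 1) :=
  Measure.restrict_congr_set <| Measure.volume_eq_prod ℝ ℝ ▸
    (Measure.set_prod_ae_eq Ico_ae_eq_Icc Ico_ae_eq_Icc).symm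

theorem log_blockAvg_L1_convergence
    (r : ℝ × ℝ → ℝ) (hrm : Measurable r)
    (hr : ∀ p ∈ Set.Icc (0:ℝ) 1 ×ˢ Set.Icc (0:ℝ) 1, r p ∈ Set.Ioo (0:ℝ) 1)
    (hlogr : Integrable (fun p => Real.log (r p)) sqMeasure)
    (hae : ∀ᵐ p ∂sqMeasure,
      Filter.Tendsto (fun n => blockAvg n r p) Filter.atTop (nhds (r p))) :
    Filter.Tendsto
      (fun n => ∫ p, |Real.log (blockAvg n r p) - Real.log (r p)| ∂sqMeasure)
      Filter.atTop (nhds 0) := by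
  set S := Ico (0 : ℝ) 1 ×ˢ Ico (0 : ℝ) 1
  have hrS : ∀ p ∈ S, r p ∈ Ioc (0 : ℝ) 1 := fun p hp =>
    Ioo_subset_Ioc_self (hr p (prod_mono Ico_subset_Icc_self Ico_subset_Icc_self hp))
  have hmemS : ∀ᵐ p ∂volume.restrict S, p ∈ S :=
    ae_restrict_mem (measurableSet_Ico.prod measurableSet_Ico)
  rw [sqMeasure_eq_restrict_Ico] at hlogr hae ⊢
  have hbound : ∀ n ≠ 0, ∀ᵐ p ∂volume.restrict S, 0 ≤ -Real.log (blockAvg n r p) ∧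
      -Real.log (blockAvg n r p) ≤ blockAvg n (fun p => -Real.log (r p)) p := fun n hn =>
    hmemS.mono fun _ hq => neg_log_blockAvg_nonneg_and_le hn hrm hrS hlogr hq
  have hint : ∀ n ≠ 0, IntegrableOn (fun p => -Real.log (blockAvg n r p)) S := fun n hn =>
    (integrableOn_blockAvg hn _).mono' (measurable_blockAvg n r).log.neg.aestronglyMeasurable
      ((hbound n hn).mono fun _ hp => (Real.norm_of_nonneg hp.1).trans_le hp.2)
  have hle : ∀ n ≠ 0, ∫ p in S, -Real.log (blockAvg n r p) ≤ ∫ p in S, -Real.log (r p) :=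
    fun n hn => (integral_mono_ae (hint n hn) (integrableOn_blockAvg hn _)
      ((hbound n hn).mono fun _ hp => hp.2)).trans_eq (setIntegral_blockAvg hn hlogr.neg)
  have hlim : ∀ᵐ p ∂volume.restrict S,
      Tendsto (fun n => -Real.log (blockAvg n r p)) atTop (𝓝 (-Real.log (r p))) := by
    filter_upwards [hae, hmemS] with p hp hpS
    exact (hp.log (hrS p hpS).1.ne').neg
  have h_ne : ∀ᶠ n in atTop, n ≠ 0 := eventually_ne_atTop 0
  simpa only [neg_sub_neg, abs_sub_comm] using
    tendsto_integral_abs_sub_of_tendsto_ae_of_integral_le (f := fun p => -Real.log (r p))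
      (h_ne.mono hint) hlogr.neg (h_ne.mono fun n hn => (hbound n hn).mono fun _ hp => hp.1)
      (h_ne.mono hle) hlim
end

section
/- Let r, s : [0,1]² → (0,1) be measurable with log r, log(1-r), log s, log(1-s) ∈ L¹([0,1]²). Then for every measurable f : [0,1]² → [0,1], |I_s(f) - I_r(f)| ≤ ‖log s - log r‖_{L¹} + ‖log(1-s) - log(1-r)‖_{L¹}. -/
open MeasureTheory

instance : IsFiniteMeasure sqMeasure := by
  constructor
  rw [sqMeasure, Measure.restrict_apply_univ]
  exact (isCompact_Icc.prod isCompact_Icc).measure_lt_top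

lemma log_term_eq (x y z : ℝ) (hx : 0 ≤ x) (hy : 0 < y) (hz : 0 < z) :
    x * Real.log (x / y) - x * Real.log (x / z) = x * (Real.log z - Real.log y) := by
  rcases eq_or_lt_of_le hx with h | h
  · simp [← h]
  · rw [Real.log_div h.ne' hy.ne', Real.log_div h.ne' hz.ne']
    ring

lemma log_term_bound (x y : ℝ) (hx0 : 0 ≤ x) (hx1 : x ≤ 1) (hy : 0 < y) :
    |x * Real.log (x / y)| ≤ 1 + |Real.log y| := by
  rcases eq_or_lt_of_le hx0 with h | h
  · simp [← h]
    positivity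
  · rw [Real.log_div h.ne' hy.ne']
    have h1 : |Real.log x * x| < 1 := Real.abs_log_mul_self_lt x h hx1
    calc |x * (Real.log x - Real.log y)| = |x * Real.log x - x * Real.log y| := by ring_nf
      _ ≤ |x * Real.log x| + |x * Real.log y| := abs_sub _ _
      _ ≤ 1 + |Real.log y| := by
          refine add_le_add ?_ ?_
          · rw [mul_comm]; exact h1.le
          · rw [abs_mul, abs_of_pos h]
            exact mul_le_of_le_one_left (abs_nonneg _) hx1

theorem rate_diff_bound
    (r s : ℝ × ℝ → ℝ) (hrm : Measurable r) (hsm : Measurable s)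
    (hr : ∀ p ∈ Set.Icc (0:ℝ) 1 ×ˢ Set.Icc (0:ℝ) 1, r p ∈ Set.Ioo (0:ℝ) 1)
    (hs : ∀ p ∈ Set.Icc (0:ℝ) 1 ×ˢ Set.Icc (0:ℝ) 1, s p ∈ Set.Ioo (0:ℝ) 1)
    (hlogr : Integrable (fun p => Real.log (r p)) sqMeasure)
    (hlogr' : Integrable (fun p => Real.log (1 - r p)) sqMeasure)
    (hlogs : Integrable (fun p => Real.log (s p)) sqMeasure)
    (hlogs' : Integrable (fun p => Real.log (1 - s p)) sqMeasure)
    (f : ℝ × ℝ → ℝ) (hfm : Measurable f)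
    (hf : ∀ p ∈ Set.Icc (0:ℝ) 1 ×ˢ Set.Icc (0:ℝ) 1, f p ∈ Set.Icc (0:ℝ) 1) :
    |(∫ p, Rent (f p) (s p) ∂sqMeasure) - ∫ p, Rent (f p) (r p) ∂sqMeasure| ≤
      (∫ p, |Real.log (s p) - Real.log (r p)| ∂sqMeasure) +
        ∫ p, |Real.log (1 - s p) - Real.log (1 - r p)| ∂sqMeasure := by
  have hSmeas : MeasurableSet (Set.Icc (0:ℝ) 1 ×ˢ Set.Icc (0:ℝ) 1) :=
    measurableSet_Icc.prod measurableSet_Icc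
  have hae : ∀ᵐ p ∂sqMeasure, p ∈ Set.Icc (0:ℝ) 1 ×ˢ Set.Icc (0:ℝ) 1 :=
    ae_restrict_mem hSmeas
  -- measurability of Rent compositions
  have hms : AEStronglyMeasurable (fun p => Rent (f p) (s p)) sqMeasure := by
    unfold Rent
    exact (((hfm.mul ((hfm.div hsm).log)).add
      (((measurable_const.sub hfm)).mul
        (((measurable_const.sub hfm).div (measurable_const.sub hsm)).log))).aestronglyMeasurable)
  have hmr : AEStronglyMeasurable (fun p => Rent (f p) (r p)) sqMeasure := by
    unfold Rent
    exact (((hfm.mul ((hfm.div hrm).log)).add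
      (((measurable_const.sub hfm)).mul
        (((measurable_const.sub hfm).div (measurable_const.sub hrm)).log))).aestronglyMeasurable)
  -- integrability of Rent terms
  have hint : ∀ (g : ℝ × ℝ → ℝ),
      (∀ p ∈ Set.Icc (0:ℝ) 1 ×ˢ Set.Icc (0:ℝ) 1, g p ∈ Set.Ioo (0:ℝ) 1) →
      Integrable (fun p => Real.log (g p)) sqMeasure →
      Integrable (fun p => Real.log (1 - g p)) sqMeasure →
      AEStronglyMeasurable (fun p => Rent (f p) (g p)) sqMeasure →
      Integrable (fun p => Rent (f p) (g p)) sqMeasure := by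
    intro g hg hlg hlg' hm
    refine Integrable.mono'
      (((integrable_const (2:ℝ)).add hlg.abs).add hlg'.abs) hm ?_
    filter_upwards [hae] with p hp
    have hfp := hf p hp
    have hgp := hg p hp
    have b1 := log_term_bound (f p) (g p) hfp.1 hfp.2 hgp.1
    have b2 := log_term_bound (1 - f p) (1 - g p) (by linarith [hfp.2]) (by linarith [hfp.1])
      (by linarith [hgp.2])
    calc ‖Rent (f p) (g p)‖
        ≤ |f p * Real.log (f p / g p)| + |(1 - f p) * Real.log ((1 - f p) / (1 - g p))| :=
          abs_add_le _ _
      _ ≤ (1 + |Real.log (g p)|) + (1 + |Real.log (1 - g p)|) := add_le_add b1 b2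
      _ = (2 + |Real.log (g p)|) + |Real.log (1 - g p)| := by ring
  have h1 : Integrable (fun p => Rent (f p) (s p)) sqMeasure := hint s hs hlogs hlogs' hms
  have h2 : Integrable (fun p => Rent (f p) (r p)) sqMeasure := hint r hr hlogr hlogr' hmr
  rw [← integral_sub h1 h2]
  have key : ∀ᵐ p ∂sqMeasure,
      |Rent (f p) (s p) - Rent (f p) (r p)| ≤
        |Real.log (s p) - Real.log (r p)| + |Real.log (1 - s p) - Real.log (1 - r p)| := by
    filter_upwards [hae] with p hp
    have hfp := hf p hp
    have hrp := hr p hp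
    have hsp := hs p hp
    have e1 := log_term_eq (f p) (s p) (r p) hfp.1 hsp.1 hrp.1
    have e2 := log_term_eq (1 - f p) (1 - s p) (1 - r p) (by linarith [hfp.2])
      (by linarith [hsp.2]) (by linarith [hrp.2])
    have heq : Rent (f p) (s p) - Rent (f p) (r p)
        = f p * (Real.log (r p) - Real.log (s p))
          + (1 - f p) * (Real.log (1 - r p) - Real.log (1 - s p)) := by
      have : Rent (f p) (s p) - Rent (f p) (r p) =
        (f p * Real.log (f p / s p) - f p * Real.log (f p / r p)) +
        ((1 - f p) * Real.log ((1 - f p) / (1 - s p)) -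
          (1 - f p) * Real.log ((1 - f p) / (1 - r p))) := by unfold Rent; ring
      rw [this, e1, e2]
    rw [heq]
    have hb1 : |f p * (Real.log (r p) - Real.log (s p))| ≤ |Real.log (s p) - Real.log (r p)| := by
      rw [abs_mul, abs_of_nonneg hfp.1, abs_sub_comm]
      exact mul_le_of_le_one_left (abs_nonneg _) hfp.2
    have hb2 : |(1 - f p) * (Real.log (1 - r p) - Real.log (1 - s p))| ≤
        |Real.log (1 - s p) - Real.log (1 - r p)| := by
      rw [abs_mul, abs_of_nonneg (by linarith [hfp.2] : (0:ℝ) ≤ 1 - f p), abs_sub_comm]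
      exact mul_le_of_le_one_left (abs_nonneg _) (by linarith [hfp.1])
    calc |f p * (Real.log (r p) - Real.log (s p))
          + (1 - f p) * (Real.log (1 - r p) - Real.log (1 - s p))|
        ≤ _ + _ := abs_add_le _ _
      _ ≤ _ := add_le_add hb1 hb2
  calc |∫ p, (Rent (f p) (s p) - Rent (f p) (r p)) ∂sqMeasure|
      ≤ ∫ p, |Rent (f p) (s p) - Rent (f p) (r p)| ∂sqMeasure := by
        simpa [Real.norm_eq_abs] using
          norm_integral_le_integral_norm (μ := sqMeasure)
            (fun p => Rent (f p) (s p) - Rent (f p) (r p))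
    _ ≤ ∫ p, (|Real.log (s p) - Real.log (r p)|
          + |Real.log (1 - s p) - Real.log (1 - r p)|) ∂sqMeasure := by
        refine integral_mono_ae (h1.sub h2).abs
          (((hlogs.sub hlogr).abs).add ((hlogs'.sub hlogr').abs)) key
    _ = _ := integral_add ((hlogs.sub hlogr).abs) ((hlogs'.sub hlogr').abs)
end
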